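/- Fix a partition λ of length at most m+n. There is a bijection between staircase walks π from the top-right to the bottom-left corner of an n×m rectangle and pairs of partitions (μ,ν) with μ ⋆_{m,n} ν = λ, given by π ↦ (μ(π) + λ_{V(π)}, ν(π)' + λ_{H(π)}). Moreover the sign satisfies ε(μ,ν) = (−1)^{|ν(π)|} = (−1)^{mn − |μ(π)|}. -/

import Mathlib

/-- `ρ_k = (k-1, …, 1, 0)` (0-indexed: `ρ_k(i) = k - 1 - i`). -/
def rhoSeq (k : ℕ) : Fin k → ℕ := fun i => k - 1 - (i : ℕ)

/-- The concatenation `(μ + ρ_m) ∪ (ν + ρ_n)`. -/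
def catSeq {m n : ℕ} (mu : Fin m → ℕ) (nu : Fin n → ℕ) : Fin (m + n) → ℕ :=
  Fin.append (fun i => mu i + rhoSeq m i) (fun j => nu j + rhoSeq n j)

/-- `λ` is the `(m,n)`-overlap of `μ` and `ν`: `λ + ρ_{m+n}` is a rearrangement
of the concatenation `(μ + ρ_m) ∪ (ν + ρ_n)`. -/
def IsOverlapOf {m n : ℕ} (mu : Fin m → ℕ) (nu : Fin n → ℕ)
    (lam : Fin (m + n) → ℕ) : Prop :=
  ∃ σ : Equiv.Perm (Fin (m + n)), ∀ i, lam i + rhoSeq (m + n) i = catSeq mu nu (σ i)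

/-- The sign `ε(μ,ν)` of the sorting permutation of the overlap (equal to `1`
if the overlap does not exist). -/
noncomputable def overlapSign {m n : ℕ} (mu : Fin m → ℕ) (nu : Fin n → ℕ)
    (lam : Fin (m + n) → ℕ) : ℤ :=
  if h : ∃ σ : Equiv.Perm (Fin (m + n)), ∀ i, lam i + rhoSeq (m + n) i = catSeq mu nu (σ i)
  then (Equiv.Perm.sign h.choose : ℤ) else 1

/-- Extend a finitely supported partition `Fin k → ℕ` to `ℕ → ℕ` by zeros. -/
def finExtend {k : ℕ} (f : Fin k → ℕ) : ℕ → ℕ := fun i => if h : i < k then f ⟨i, h⟩ else 0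

/-- A staircase walk from the top-right to the bottom-left corner of an `n × m`
rectangle (using only west and south steps) is encoded by the set `V` of times
of its `m` vertical (south) steps among its `m + n` steps. `vEnum V i` is the
time of the `i`-th vertical step. -/
def vEnum {m n : ℕ} (V : {V : Finset (Fin (m + n)) // V.card = m}) :
    Fin m → Fin (m + n) :=
  fun i => (V.1.orderIsoOfFin V.2 i).1

/-- The time of the `j`-th horizontal (west) step of the staircase walk. -/
def hEnum {m n : ℕ} (V : {V : Finset (Fin (m + n)) // V.card = m}) :
    Fin n → Fin (m + n) :=
  fun j => ((V.1ᶜ).orderIsoOfFin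
    (by rw [Finset.card_compl, V.2, Fintype.card_fin]; try omega) j).1

/-- The partition `μ(π)` lying above the staircase walk: its `i`-th row is the
number of horizontal steps taken after the `i`-th vertical step. -/
def muWalk {m n : ℕ} (V : {V : Finset (Fin (m + n)) // V.card = m}) : Fin m → ℕ :=
  fun i => ((V.1ᶜ).filter (fun t => vEnum V i < t)).card

/-- The conjugate `ν(π)'` of the partition `ν(π)` lying (rotated by 180°) below
the staircase walk: its `j`-th column is the number of vertical steps taken
after the `j`-th horizontal step. -/
def nuConjWalk {m n : ℕ} (V : {V : Finset (Fin (m + n)) // V.card = m}) : Fin n → ℕ :=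
  fun j => (V.1.filter (fun t => hEnum V j < t)).card

/-- The pair of partitions `(μ(π) + λ_{V(π)}, ν(π)' + λ_{H(π)})` associated to a
staircase walk `π` (encoded by its set `V` of vertical-step times) and a
labelling partition `λ`. -/
def walkPair {m n : ℕ} (lam : Fin (m + n) → ℕ)
    (V : {V : Finset (Fin (m + n)) // V.card = m}) : (Fin m → ℕ) × (Fin n → ℕ) :=
  (fun i => muWalk V i + lam (vEnum V i), fun j => nuConjWalk V j + lam (hEnum V j))

/-!
Put `F = λ + ρ_{m+n}`, a strictly decreasing sequence. Counting the steps after the `i`-th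
vertical step gives `μ(π)_i + ρ_m(i) = ρ_{m+n}(V_i)`, and likewise
`ν(π)'_j + ρ_n(j) = ρ_{m+n}(H_j)`. So for the image pair, `(μ + ρ_m) ∪ (ν + ρ_n)` is `F`
composed with the shuffle permutation listing first the vertical and then the horizontal step
times; as `F` is injective, this is the only sorting permutation. Conversely, a sorting
permutation of an overlap pair sends the `μ`-entries and the `ν`-entries to two increasing
sequences of times, and the first of them is the set of vertical steps of the preimage walk.
The inversions of the shuffle are the pairs (horizontal step, later vertical step), i.e. the
boxes of `ν(π)`, and every box of the rectangle lies in exactly one of `μ(π)` and `ν(π)`.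
-/

open Finset

section OrderEmbOfFin

variable {α : Type*} [LinearOrder α] {k : ℕ}

lemma card_filter_eq_card_filter_orderEmbOfFin (s : Finset α) (h : #s = k)
    (p : α → Prop) [DecidablePred p] :
    #(s.filter p) = #(univ.filter fun i => p (s.orderEmbOfFin h i)) := by
  conv_lhs => rw [← map_orderEmbOfFin_univ s h, filter_map, card_map]
  rfl

lemma card_filter_orderEmbOfFin_lt (s : Finset α) (h : #s = k) (i : Fin k) :
    #(s.filter (s.orderEmbOfFin h i < ·)) = k - 1 - i := by
  simp [card_filter_eq_card_filter_orderEmbOfFin s h, filter_lt_eq_Ioi]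

end OrderEmbOfFin

lemma card_compl_filter_orderEmbOfFin_lt_add_rhoSeq {N k : ℕ} (s : Finset (Fin N))
    (h : #s = k) (i : Fin k) :
    #(sᶜ.filter (s.orderEmbOfFin h i < ·)) + rhoSeq k i = rhoSeq N (s.orderEmbOfFin h i) := by
  set a := s.orderEmbOfFin h i
  have hsplit := card_filter_add_card_filter_not (s := Ioi a) (· ∈ s)
  have hin : (Ioi a).filter (· ∈ s) = s.filter (a < ·) := by ext; simp [and_comm]
  have hout : (Ioi a).filter (· ∉ s) = sᶜ.filter (a < ·) := by ext; simp [and_comm]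
  rw [hin, hout, card_filter_orderEmbOfFin_lt, Fin.card_Ioi] at hsplit
  simp only [rhoSeq]
  omega

section Walk

variable {m n : ℕ} (V : {V : Finset (Fin (m + n)) // V.card = m})

lemma card_compl_walk : #V.1ᶜ = n := by
  rw [card_compl, V.2, Fintype.card_fin, Nat.add_sub_cancel_left]

lemma vEnum_eq : vEnum V = V.1.orderEmbOfFin V.2 := rfl

lemma hEnum_eq : hEnum V = V.1ᶜ.orderEmbOfFin (card_compl_walk V) := rfl

lemma vEnum_strictMono : StrictMono (vEnum V) := (V.1.orderEmbOfFin V.2).strictMono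

lemma hEnum_strictMono : StrictMono (hEnum V) :=
  (V.1ᶜ.orderEmbOfFin (card_compl_walk V)).strictMono

lemma muWalk_add_rhoSeq (i : Fin m) :
    muWalk V i + rhoSeq m i = rhoSeq (m + n) (vEnum V i) :=
  card_compl_filter_orderEmbOfFin_lt_add_rhoSeq V.1 V.2 i

lemma nuConjWalk_add_rhoSeq (j : Fin n) :
    nuConjWalk V j + rhoSeq n j = rhoSeq (m + n) (hEnum V j) := by
  have h := card_compl_filter_orderEmbOfFin_lt_add_rhoSeq V.1ᶜ (card_compl_walk V) j
  rwa [compl_compl] at h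

lemma muWalk_eq_card (i : Fin m) : muWalk V i = #{j | vEnum V i < hEnum V j} :=
  card_filter_eq_card_filter_orderEmbOfFin _ (card_compl_walk V) _

lemma nuConjWalk_eq_card (j : Fin n) : nuConjWalk V j = #{i | hEnum V j < vEnum V i} :=
  card_filter_eq_card_filter_orderEmbOfFin _ V.2 _

lemma vEnum_ne_hEnum (i : Fin m) (j : Fin n) : vEnum V i ≠ hEnum V j := by
  intro h
  have hv : vEnum V i ∈ V.1 := orderEmbOfFin_mem _ V.2 i
  have hh : hEnum V j ∈ V.1ᶜ := orderEmbOfFin_mem _ (card_compl_walk V) j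
  exact mem_compl.mp hh (h ▸ hv)

lemma sum_muWalk_add_sum_nuConjWalk : ∑ i, muWalk V i + ∑ j, nuConjWalk V j = m * n := by
  have hswap : ∑ j, nuConjWalk V j = ∑ i, #{j | hEnum V j < vEnum V i} := by
    simp_rw [nuConjWalk_eq_card]
    exact (sum_card_bipartiteAbove_eq_sum_card_bipartiteBelow
      (r := fun i j => hEnum V j < vEnum V i)).symm
  have hrow (i : Fin m) : #{j | vEnum V i < hEnum V j} + #{j | hEnum V j < vEnum V i} = n := by
    have hnot : ∀ j, ¬ vEnum V i < hEnum V j ↔ hEnum V j < vEnum V i := fun j =>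
      not_lt.trans ((le_iff_lt_or_eq).trans (or_iff_left (vEnum_ne_hEnum V i j).symm))
    simp_rw [← hnot]
    rw [card_filter_add_card_filter_not, card_univ, Fintype.card_fin]
  simp_rw [hswap, muWalk_eq_card, ← sum_add_distrib, hrow, sum_const, card_univ,
    Fintype.card_fin, smul_eq_mul]

end Walk

def addRho {k : ℕ} (f : Fin k → ℕ) : Fin k → ℕ := fun i => f i + rhoSeq k i

lemma strictAnti_addRho_iff {k : ℕ} {f : Fin k → ℕ} :
    StrictAnti (addRho f) ↔ Antitone f := by
  constructor
  · intro hf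
    cases k with
    | zero => exact fun i => i.elim0
    | succ k =>
      refine Fin.antitone_iff_succ_le.mpr fun i => ?_
      have h := hf (Fin.castSucc_lt_succ (i := i))
      simp only [addRho, rhoSeq, Fin.val_castSucc, Fin.val_succ] at h
      omega
  · intro hf a b hab
    have := hf hab.le
    have : (a : ℕ) < b := hab
    have := b.2
    simp only [addRho, rhoSeq]
    omega

lemma addRho_injective {k : ℕ} :
    Function.Injective (addRho : (Fin k → ℕ) → Fin k → ℕ) :=
  fun _ _ h => funext fun i => Nat.add_right_cancel (congrFun h i)

section WalkPerm

variable {m n : ℕ} (V : {V : Finset (Fin (m + n)) // V.card = m})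

def walkPerm : Equiv.Perm (Fin (m + n)) :=
  finSumFinEquiv.symm.trans (finSumEquivOfFinset V.2 (card_compl_walk V))

@[simp] lemma walkPerm_castAdd (i : Fin m) : walkPerm V (Fin.castAdd n i) = vEnum V i := by
  simp [walkPerm, vEnum_eq]

@[simp] lemma walkPerm_natAdd (j : Fin n) : walkPerm V (Fin.natAdd m j) = hEnum V j := by
  simp [walkPerm, hEnum_eq]

variable (lam : Fin (m + n) → ℕ)

lemma addRho_walkPair_fst : addRho (walkPair lam V).1 = addRho lam ∘ vEnum V := by
  funext i
  have := muWalk_add_rhoSeq V i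
  simp only [addRho, walkPair, Function.comp]
  omega

lemma addRho_walkPair_snd : addRho (walkPair lam V).2 = addRho lam ∘ hEnum V := by
  funext j
  have := nuConjWalk_add_rhoSeq V j
  simp only [addRho, walkPair, Function.comp]
  omega

lemma catSeq_walkPair :
    catSeq (walkPair lam V).1 (walkPair lam V).2 = addRho lam ∘ walkPerm V := by
  funext t
  refine Fin.addCases (fun i => ?_) (fun j => ?_) t
  · simpa [catSeq, addRho] using congrFun (addRho_walkPair_fst V lam) i
  · simpa [catSeq, addRho] using congrFun (addRho_walkPair_snd V lam) j

lemma walkPair_isOverlapOf : IsOverlapOf (walkPair lam V).1 (walkPair lam V).2 lam :=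
  ⟨(walkPerm V).symm, fun t => by simp [catSeq_walkPair, addRho]⟩

end WalkPerm

lemma Equiv.Perm.sign_eq_neg_one_pow_of_strictMono_castAdd_natAdd {m n : ℕ}
    (σ : Equiv.Perm (Fin (m + n))) (hl : StrictMono (σ ∘ Fin.castAdd n))
    (hr : StrictMono (σ ∘ Fin.natAdd m)) :
    Equiv.Perm.sign σ =
      (-1) ^ ∑ j : Fin n, #{i | σ (Fin.natAdd m j) < σ (Fin.castAdd n i)} := by
  have hleft (a : Fin m) :
      ∏ t ∈ Iio (Fin.castAdd n a),
        (if σ t < σ (Fin.castAdd n a) then 1 else -1 : ℤˣ) = 1 := by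
    refine prod_eq_one fun t ht => if_pos ?_
    rw [mem_Iio] at ht
    induction t using Fin.addCases with
    | left b => exact hl ((Fin.strictMono_castAdd n).lt_iff_lt.mp ht)
    | right c => exact absurd ht (by simp [Fin.lt_def]; omega)
  have hright (b : Fin n) :
      ∏ t ∈ Iio (Fin.natAdd m b), (if σ t < σ (Fin.natAdd m b) then 1 else -1 : ℤˣ) =
        (-1) ^ #{i | σ (Fin.natAdd m b) < σ (Fin.castAdd n i)} := by
    have hne (a : Fin m) : σ (Fin.castAdd n a) ≠ σ (Fin.natAdd m b) := by
      simp [Fin.ext_iff]; omega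
    have hlater (c : Fin n) : (if Fin.natAdd m c < Fin.natAdd m b then
        (if σ (Fin.natAdd m c) < σ (Fin.natAdd m b) then 1 else -1) else 1 : ℤˣ) = 1 := by
      split_ifs with hcb h
      · rfl
      · exact absurd (hr ((Fin.strictMono_natAdd m).lt_iff_lt.mp hcb)) h
      · rfl
    rw [← filter_gt_eq_Iio, prod_filter, Fin.prod_univ_add, prod_eq_one fun c _ => hlater c,
      mul_one]
    have hearlier (a : Fin m) : (if Fin.castAdd n a < Fin.natAdd m b then
        (if σ (Fin.castAdd n a) < σ (Fin.natAdd m b) then 1 else -1) else 1 : ℤˣ) =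
        if σ (Fin.natAdd m b) < σ (Fin.castAdd n a) then -1 else 1 := by
      rw [if_pos (by simp [Fin.lt_def]; omega)]
      rcases (hne a).lt_or_gt with h | h
      · rw [if_pos h, if_neg h.not_gt]
      · rw [if_neg h.not_gt, if_pos h]
    rw [prod_congr rfl fun a _ => hearlier a, prod_ite, prod_const, prod_const_one, mul_one]
  rw [Equiv.Perm.sign_eq_prod_prod_Iio, Fin.prod_univ_add, prod_eq_one fun a _ => hleft a,
    one_mul, prod_congr rfl fun b _ => hright b, prod_pow_eq_pow_sum]

section Bijection

variable {m n : ℕ} {lam : Fin (m + n) → ℕ}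

lemma antitone_walkPair_fst (hlam : Antitone lam) (V : {V : Finset (Fin (m + n)) // V.card = m}) :
    Antitone (walkPair lam V).1 := by
  rw [← strictAnti_addRho_iff, addRho_walkPair_fst]
  exact (strictAnti_addRho_iff.mpr hlam).comp_strictMono (vEnum_strictMono V)

lemma antitone_walkPair_snd (hlam : Antitone lam) (V : {V : Finset (Fin (m + n)) // V.card = m}) :
    Antitone (walkPair lam V).2 := by
  rw [← strictAnti_addRho_iff, addRho_walkPair_snd]
  exact (strictAnti_addRho_iff.mpr hlam).comp_strictMono (hEnum_strictMono V)

lemma eq_walkPerm_symm_of_overlap (hlam : Antitone lam)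
    (V : {V : Finset (Fin (m + n)) // V.card = m})
    {σ : Equiv.Perm (Fin (m + n))}
    (hσ : ∀ t, lam t + rhoSeq (m + n) t = catSeq (walkPair lam V).1 (walkPair lam V).2 (σ t)) :
    σ = (walkPerm V).symm := by
  ext1 t
  rw [Equiv.eq_symm_apply]
  refine (strictAnti_addRho_iff.mpr hlam).injective ?_
  simpa [catSeq_walkPair, addRho] using (hσ t).symm

lemma sign_walkPerm (V : {V : Finset (Fin (m + n)) // V.card = m}) :
    Equiv.Perm.sign (walkPerm V) = (-1) ^ ∑ j, nuConjWalk V j := by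
  have hl : StrictMono (walkPerm V ∘ Fin.castAdd n) := by
    rw [show walkPerm V ∘ Fin.castAdd n = vEnum V from funext (walkPerm_castAdd V)]
    exact vEnum_strictMono V
  have hr : StrictMono (walkPerm V ∘ Fin.natAdd m) := by
    rw [show walkPerm V ∘ Fin.natAdd m = hEnum V from funext (walkPerm_natAdd V)]
    exact hEnum_strictMono V
  rw [Equiv.Perm.sign_eq_neg_one_pow_of_strictMono_castAdd_natAdd _ hl hr]
  simp_rw [walkPerm_castAdd, walkPerm_natAdd, nuConjWalk_eq_card]

lemma overlapSign_walkPair (hlam : Antitone lam)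
    (V : {V : Finset (Fin (m + n)) // V.card = m}) :
    overlapSign (walkPair lam V).1 (walkPair lam V).2 lam = (-1) ^ ∑ j, nuConjWalk V j := by
  have h := walkPair_isOverlapOf V lam
  unfold IsOverlapOf at h
  rw [overlapSign, dif_pos h, eq_walkPerm_symm_of_overlap hlam V h.choose_spec,
    Equiv.Perm.sign_symm, sign_walkPerm]
  push_cast
  rfl

lemma walkPair_injective (hlam : Antitone lam) : Function.Injective (walkPair lam) := by
  intro V W h
  have hv : vEnum V = vEnum W := by
    have hF := addRho_walkPair_fst V lam
    rw [h, addRho_walkPair_fst] at hF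
    exact ((strictAnti_addRho_iff.mpr hlam).injective.comp_left hF).symm
  refine Subtype.ext ?_
  rw [← image_orderEmbOfFin_univ V.1 V.2, ← image_orderEmbOfFin_univ W.1 W.2]
  exact congrArg (image · univ) hv

lemma exists_walkPair_eq (hlam : Antitone lam) {p : (Fin m → ℕ) × (Fin n → ℕ)}
    (h1 : Antitone p.1) (h2 : Antitone p.2) (h3 : IsOverlapOf p.1 p.2 lam) :
    ∃ V, walkPair lam V = p := by
  obtain ⟨σ, hσ⟩ := h3
  have hF := strictAnti_addRho_iff.mpr hlam
  set g := σ.symm ∘ Fin.castAdd n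
  set k := σ.symm ∘ Fin.natAdd m
  have hg : addRho lam ∘ g = addRho p.1 := funext fun i => by
    simpa [g, catSeq, addRho] using hσ (g i)
  have hk : addRho lam ∘ k = addRho p.2 := funext fun j => by
    simpa [k, catSeq, addRho] using hσ (k j)
  have hg_mono : StrictMono g := fun a b hab => hF.lt_iff_gt.mp <| by
    simpa only [← hg, Function.comp_apply] using strictAnti_addRho_iff.mpr h1 hab
  have hk_mono : StrictMono k := fun a b hab => hF.lt_iff_gt.mp <| by
    simpa only [← hk, Function.comp_apply] using strictAnti_addRho_iff.mpr h2 hab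
  let V : {V : Finset (Fin (m + n)) // V.card = m} :=
    ⟨univ.image g, by rw [card_image_of_injective _ hg_mono.injective, card_fin]⟩
  have hvg : vEnum V = g :=
    (orderEmbOfFin_unique V.2 (fun i => mem_image_of_mem g (mem_univ i)) hg_mono).symm
  have hhk : hEnum V = k := by
    refine (orderEmbOfFin_unique (card_compl_walk V) (fun j => ?_) hk_mono).symm
    simp [V, g, k, Fin.ext_iff]
    omega
  refine ⟨V, Prod.ext (addRho_injective ?_) (addRho_injective ?_)⟩
  · rw [addRho_walkPair_fst, hvg, hg]
  · rw [addRho_walkPair_snd, hhk, hk]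

end Bijection

/-- **Walks biject with overlapping pairs.** Fix a partition `λ` of length at
most `m + n`. The map `π ↦ (μ(π) + λ_{V(π)}, ν(π)' + λ_{H(π)})` is a bijection
from staircase walks in an `n × m` rectangle onto the pairs of partitions whose
`(m,n)`-overlap is `λ`; moreover
`ε(μ,ν) = (-1)^{|ν(π)|} = (-1)^{mn - |μ(π)|}`. -/
theorem walks_biject_overlap_pairs (m n : ℕ) (lam : Fin (m + n) → ℕ)
    (hlam : Antitone lam) :
    Function.Injective (walkPair lam) ∧
    Set.range (walkPair lam) =
      {p : (Fin m → ℕ) × (Fin n → ℕ) | Antitone p.1 ∧ Antitone p.2 ∧ IsOverlapOf p.1 p.2 lam} ∧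
    ∀ V, overlapSign (walkPair lam V).1 (walkPair lam V).2 lam =
        (-1 : ℤ) ^ (∑ j, nuConjWalk V j) ∧
      overlapSign (walkPair lam V).1 (walkPair lam V).2 lam =
        (-1 : ℤ) ^ (m * n - ∑ i, muWalk V i) := by
  refine ⟨walkPair_injective hlam, ?_, fun V => ⟨overlapSign_walkPair hlam V, ?_⟩⟩
  · ext p
    constructor
    · rintro ⟨V, rfl⟩
      exact ⟨antitone_walkPair_fst hlam V, antitone_walkPair_snd hlam V,
        walkPair_isOverlapOf V lam⟩
    · rintro ⟨h1, h2, h3⟩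
      exact exists_walkPair_eq hlam h1 h2 h3
  · rw [overlapSign_walkPair hlam V, ← sum_muWalk_add_sum_nuConjWalk V, Nat.add_sub_cancel_left]
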